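/- A polynomial vector field v of degree at most k−1 on ℝ^d satisfies v(x)·x ≡ 0 if and only if v(x) = N(x)·x for some polynomial matrix field N of degree at most k−2 taking values in skew-symmetric d×d matrices; i.e., ker(·x) ∩ ℙ_{k−1}(ℝ^d; ℝ^d) = ℙ_{k−2}(ℝ^d; 𝕂)·x, where 𝕂 denotes skew-symmetric matrices. -/

import Mathlib

/-!
Differentiating `∑ᵢ xᵢ vᵢ = 0` in `xᵢ` gives `vᵢ + ∑ⱼ xⱼ ∂ᵢvⱼ = 0`, so by Euler's identity
`∑ⱼ (∂ⱼvᵢ - ∂ᵢvⱼ) xⱼ = (E + 1) vᵢ`, where `E` multiplies the degree-`m` part by `m`.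
Dividing the degree-`m` part of the curl `∂ⱼvᵢ - ∂ᵢvⱼ` by `m + 2` (the radial average
`∫₀¹ t (curl v)(t x) dt`) hence yields a skew field `N` of degree `deg v - 1` with `N x = v`.
Conversely `x ⬝ N x = 0` whenever `N` is skew.
-/

open MvPolynomial Finset

namespace MvPolynomial

variable {R σ : Type*} [CommSemiring R]

theorem coeff_sum_support_monomial_mul (g : (σ →₀ ℕ) → R) (p : MvPolynomial σ R)
    (t : σ →₀ ℕ) : coeff t (∑ s ∈ p.support, monomial s (g s * coeff s p)) = g t * coeff t p := by
  classical
  simp only [coeff_sum, coeff_monomial, Finset.sum_ite_eq', mem_support_iff, ne_eq, ite_not]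
  split_ifs with h <;> simp [h]

noncomputable def degreeScale (w : ℕ → R) : MvPolynomial σ R →ₗ[R] MvPolynomial σ R where
  toFun p := ∑ s ∈ p.support, monomial s (w s.degree * coeff s p)
  map_add' p q := by
    ext t; rw [coeff_add, coeff_sum_support_monomial_mul, coeff_sum_support_monomial_mul,
      coeff_sum_support_monomial_mul, coeff_add, mul_add]
  map_smul' c p := by
    ext t; rw [coeff_smul, coeff_sum_support_monomial_mul, coeff_sum_support_monomial_mul,
      coeff_smul, smul_eq_mul, smul_eq_mul, RingHom.id_apply, mul_left_comm]

theorem coeff_degreeScale (w : ℕ → R) (p : MvPolynomial σ R) (s : σ →₀ ℕ) :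
    coeff s (degreeScale w p) = w s.degree * coeff s p :=
  coeff_sum_support_monomial_mul _ p s

theorem totalDegree_degreeScale_le (w : ℕ → R) (p : MvPolynomial σ R) :
    (degreeScale w p).totalDegree ≤ p.totalDegree := by
  refine totalDegree_le_of_support_subset fun s hs => ?_
  rw [mem_support_iff, coeff_degreeScale] at hs
  exact mem_support_iff.mpr (right_ne_zero_of_mul hs)

theorem IsHomogeneous.degreeScale_eq {p : MvPolynomial σ R} {n : ℕ} (hp : p.IsHomogeneous n)
    (w : ℕ → R) : degreeScale w p = w n • p := by
  ext s
  rw [coeff_degreeScale, coeff_smul, smul_eq_mul]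
  by_cases hs : s.degree = n
  · rw [hs]
  · rw [hp.coeff_eq_zero hs, mul_zero, mul_zero]

theorem degreeScale_succ_mul_X (w : ℕ → R) (p : MvPolynomial σ R) (i : σ) :
    degreeScale (fun n => w (n + 1)) p * X i = degreeScale w (p * X i) := by
  classical
  ext s
  rw [coeff_degreeScale, coeff_mul_X', coeff_mul_X']
  split_ifs with hi
  · rw [coeff_degreeScale]
    congr 2
    conv_rhs => rw [← Finsupp.sub_add_single_one_cancel (Finsupp.mem_support_iff.mp hi)]
    rw [map_add, Finsupp.degree_single]
  · rw [mul_zero]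

theorem sum_X_mul_pderiv_eq_degreeScale [Fintype σ] (p : MvPolynomial σ R) :
    ∑ i, X i * pderiv i p = degreeScale (fun n => (n : R)) p := by
  conv_lhs => rw [← sum_homogeneousComponent p]
  conv_rhs => rw [← sum_homogeneousComponent p]
  simp only [map_sum, Finset.mul_sum]
  rw [Finset.sum_comm]
  refine Finset.sum_congr rfl fun n _ => ?_
  have hn := homogeneousComponent_isHomogeneous n p
  rw [hn.sum_X_mul_pderiv, hn.degreeScale_eq, Nat.cast_smul_eq_nsmul]

theorem totalDegree_pderiv_le (i : σ) (p : MvPolynomial σ R) :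
    (pderiv i p).totalDegree ≤ p.totalDegree - 1 := by
  conv_lhs => rw [← sum_homogeneousComponent p]
  rw [map_sum]
  refine totalDegree_finsetSum_le fun n hn => ?_
  refine (homogeneousComponent_isHomogeneous n p).pderiv.totalDegree_le.trans ?_
  have := Finset.mem_range.mp hn
  omega

theorem pderiv_eq_zero_of_totalDegree_eq_zero {p : MvPolynomial σ R} (hp : p.totalDegree = 0)
    (i : σ) : pderiv i p = 0 := by
  rw [totalDegree_eq_zero_iff_eq_C.mp hp, pderiv_C]

theorem pderiv_sum_X_mul [Fintype σ] (v : σ → MvPolynomial σ R) (i : σ) :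
    pderiv i (∑ j, X j * v j) = v i + ∑ j, X j * pderiv i (v j) := by
  classical
  simp [Finset.sum_add_distrib, Pi.single_apply, add_comm]

end MvPolynomial

theorem sum_mul_sum_mul_eq_zero_of_antisymm {ι R : Type*} [Fintype ι] [CommRing R]
    [NoZeroDivisors R] [CharZero R] {N : ι → ι → R} (hN : ∀ i j, N j i = -N i j) (x : ι → R) :
    ∑ i, x i * ∑ j, N i j * x j = 0 := by
  refine CharZero.eq_neg_self_iff.mp ?_
  calc ∑ i, x i * ∑ j, N i j * x j
      = ∑ i, ∑ j, x i * (N i j * x j) := by simp only [Finset.mul_sum]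
    _ = ∑ j, ∑ i, x i * (N i j * x j) := Finset.sum_comm
    _ = -∑ i, x i * ∑ j, N i j * x j := by
      simp only [Finset.mul_sum, ← Finset.sum_neg_distrib]
      exact Finset.sum_congr rfl fun j _ => Finset.sum_congr rfl fun i _ => by rw [hN j i]; ring

section RadialCurl

variable {K σ : Type*} [Field K]

noncomputable def radialCurl (v : σ → MvPolynomial σ K) (i j : σ) : MvPolynomial σ K :=
  degreeScale (fun n => ((n : K) + 2)⁻¹) (pderiv j (v i) - pderiv i (v j))

theorem radialCurl_antisymm (v : σ → MvPolynomial σ K) (i j : σ) :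
    radialCurl v j i = -radialCurl v i j := by
  rw [radialCurl, radialCurl, ← map_neg, neg_sub]

theorem radialCurl_eq_zero_or_totalDegree_add_two_le {v : σ → MvPolynomial σ K} {k : ℕ}
    (hv : ∀ i, (v i).totalDegree ≤ k - 1) (i j : σ) :
    radialCurl v i j = 0 ∨ (radialCurl v i j).totalDegree + 2 ≤ k := by
  rcases Nat.lt_or_ge k 2 with hk | hk
  · have hconst : ∀ l, (v l).totalDegree = 0 := fun l => by have := hv l; omega
    left
    rw [radialCurl, pderiv_eq_zero_of_totalDegree_eq_zero (hconst i),
      pderiv_eq_zero_of_totalDegree_eq_zero (hconst j), sub_zero, map_zero]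
  · have hderiv : ∀ l m, (pderiv m (v l)).totalDegree ≤ k - 2 := fun l m =>
      (totalDegree_pderiv_le m (v l)).trans (by have := hv l; omega)
    have : (radialCurl v i j).totalDegree ≤ k - 2 := (totalDegree_degreeScale_le _ _).trans
      ((totalDegree_sub _ _).trans (max_le (hderiv i j) (hderiv j i)))
    right
    omega

theorem sum_radialCurl_mul_X [CharZero K] [Fintype σ] {v : σ → MvPolynomial σ K}
    (hv : ∑ i, X i * v i = 0) (i : σ) : ∑ j, radialCurl v i j * X j = v i := by
  have hdiv : ∑ j, X j * pderiv i (v j) = -v i := by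
    have := pderiv_sum_X_mul v i
    rw [hv, map_zero] at this
    linear_combination -this
  have hshift : (fun n : ℕ => ((n : K) + 2)⁻¹) = fun n => (((n + 1 : ℕ) : K) + 1)⁻¹ := by
    ext n; push_cast; ring
  calc ∑ j, radialCurl v i j * X j
      = degreeScale (fun n => ((n : K) + 1)⁻¹)
          (∑ j, X j * pderiv j (v i) - ∑ j, X j * pderiv i (v j)) := by
        rw [← Finset.sum_sub_distrib, map_sum]
        refine Finset.sum_congr rfl fun j _ => ?_
        rw [radialCurl, hshift, degreeScale_succ_mul_X (fun n => ((n : K) + 1)⁻¹), ← mul_sub,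
          mul_comm]
    _ = degreeScale (fun n => ((n : K) + 1)⁻¹) (degreeScale (fun n => (n : K)) (v i) + v i) := by
        rw [sum_X_mul_pderiv_eq_degreeScale, hdiv, sub_neg_eq_add]
    _ = v i := by
        ext s
        rw [coeff_degreeScale, coeff_add, coeff_degreeScale]
        field_simp

end RadialCurl

-- `N i j = 0 ∨ deg + 2 ≤ k` encodes `deg ≤ k - 2`, the zero space when `k ≤ 1`.
theorem stmt_5_general (d k : ℕ) :
    {v : Fin d → MvPolynomial (Fin d) ℝ |
        (∀ i, (v i).totalDegree ≤ k - 1) ∧ ∑ i : Fin d, X i * v i = 0} =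
    {v : Fin d → MvPolynomial (Fin d) ℝ |
        ∃ N : Fin d → Fin d → MvPolynomial (Fin d) ℝ,
          (∀ i j, N i j = 0 ∨ (N i j).totalDegree + 2 ≤ k) ∧
          (∀ i j, N j i = - N i j) ∧
          ∀ i, v i = ∑ j : Fin d, N i j * X j} := by
  ext v
  constructor
  · rintro ⟨hdeg, hv⟩
    exact ⟨radialCurl v, radialCurl_eq_zero_or_totalDegree_add_two_le hdeg, radialCurl_antisymm v,
      fun i => (sum_radialCurl_mul_X hv i).symm⟩
  · rintro ⟨N, hNdeg, hNskew, hvN⟩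
    obtain rfl : v = fun i => ∑ j, N i j * X j := funext hvN
    refine ⟨fun i => totalDegree_finsetSum_le fun j _ => ?_,
      sum_mul_sum_mul_eq_zero_of_antisymm hNskew X⟩
    rcases hNdeg i j with h | h
    · simp [h]
    · have := totalDegree_mul (N i j) (X j)
      rw [totalDegree_X] at this
      omega

/-- A polynomial vector field `v` of degree at most `k-1` satisfies `v(x)·x ≡ 0` iff
`v(x) = N(x) x` for a skew-symmetric-matrix-valued polynomial field `N` of degree at most
`k-2` (the zero space when `k = 1`, which is encoded by the condition
`N i j = 0 ∨ deg (N i j) + 2 ≤ k`). -/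
theorem stmt_5 (d k : ℕ) (hd : 1 ≤ d) (hk : 1 ≤ k) :
    {v : Fin d → MvPolynomial (Fin d) ℝ |
        (∀ i, (v i).totalDegree ≤ k - 1) ∧ ∑ i : Fin d, X i * v i = 0} =
    {v : Fin d → MvPolynomial (Fin d) ℝ |
        ∃ N : Fin d → Fin d → MvPolynomial (Fin d) ℝ,
          (∀ i j, N i j = 0 ∨ (N i j).totalDegree + 2 ≤ k) ∧
          (∀ i j, N j i = - N i j) ∧
          ∀ i, v i = ∑ j : Fin d, N i j * X j} :=
  stmt_5_general d k
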